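/- arXiv:1001.4494 — 6 statements merged into one kernel-verified Lean document; each statement's English description precedes it below -/
import Mathlib

section
/- The line set N_e = {e ∈ Im Ĥ : e₁ᵀJe₂ = 0} is invariant under the link dynamics: if e(t) solves ė₁ = e₂ψ₂ - e₁ψ₁, ė₂ = e₃ψ₃ - e₂ψ₂, ė₃ = e₁ψ₁ - e₃ψ₃ with e(0) ∈ N_e, then the derivative of t ↦ e₁(t)ᵀJe₂(t) vanishes whenever e₁ᵀJe₂ = 0 and e₁ + e₂ + e₃ = 0. -/
/-- `eᵢᵀ J eⱼ` for the planar 90° rotation `J = [[0,1],[-1,0]]`. -/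
def crossJ (u v : EuclideanSpace ℝ (Fin 2)) : ℝ := u 0 * v 1 - u 1 * v 0

theorem HasDerivAt.crossJ {u v : ℝ → EuclideanSpace ℝ (Fin 2)}
    {u' v' : EuclideanSpace ℝ (Fin 2)} {t : ℝ}
    (hu : HasDerivAt u u' t) (hv : HasDerivAt v v' t) :
    HasDerivAt (fun s => crossJ (u s) (v s)) (crossJ u' (v t) + crossJ (u t) v') t := by
  have coord {w : ℝ → EuclideanSpace ℝ (Fin 2)} {w' : EuclideanSpace ℝ (Fin 2)}
      (hw : HasDerivAt w w' t) (i : Fin 2) : HasDerivAt (fun s => w s i) (w' i) t :=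
    (EuclideanSpace.proj i : EuclideanSpace ℝ (Fin 2) →L[ℝ] ℝ).hasFDerivAt.comp_hasDerivAt t hw
  refine (((coord hu 0).mul (coord hv 1)).sub ((coord hu 1).mul (coord hv 0))).congr_deriv ?_
  unfold _root_.crossJ
  ring

/- `crossJ` is alternating and `w = -(u + v)`, so every term is a multiple of `crossJ u v`. -/
theorem crossJ_link_field {u v w : EuclideanSpace ℝ (Fin 2)} (huvw : u + v + w = 0)
    (a b c : ℝ) :
    crossJ (a • v - b • u) v + crossJ u (c • w - a • v) = -(a + b + c) * crossJ u v := by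
  obtain rfl : w = -(u + v) := eq_neg_of_add_eq_zero_right huvw
  simp only [crossJ, PiLp.sub_apply, PiLp.smul_apply, PiLp.neg_apply, PiLp.add_apply,
    smul_eq_mul]
  ring

theorem stmt_4_general
    (e₁ e₂ e₃ : ℝ → EuclideanSpace ℝ (Fin 2)) (t : ℝ)
    (ψ₁ : ℝ → ℝ) (ψ₂ : ℝ → ℝ) (ψ₃ : ℝ → ℝ)
    (h₁ : HasDerivAt e₁ (ψ₂ t • e₂ t - ψ₁ t • e₁ t) t)
    (h₂ : HasDerivAt e₂ (ψ₃ t • e₃ t - ψ₂ t • e₂ t) t)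
    (hcol : crossJ (e₁ t) (e₂ t) = 0)
    (hsum : e₁ t + e₂ t + e₃ t = 0) :
    HasDerivAt (fun s => crossJ (e₁ s) (e₂ s)) 0 t := by
  have hD := h₁.crossJ h₂
  rwa [crossJ_link_field hsum, hcol, mul_zero] at hD

/-- Invariance of the line set: along the link dynamics, the derivative of
`t ↦ e₁(t)ᵀJe₂(t)` vanishes whenever `e₁ᵀJe₂ = 0` and `e₁ + e₂ + e₃ = 0`. -/
theorem stmt_4 (d₁ d₂ d₃ : ℝ) (hd₁ : 0 < d₁) (hd₂ : 0 < d₂) (hd₃ : 0 < d₃)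
    (e₁ e₂ e₃ : ℝ → EuclideanSpace ℝ (Fin 2)) (t : ℝ)
    (ψ₁ : ℝ → ℝ) (ψ₂ : ℝ → ℝ) (ψ₃ : ℝ → ℝ)
    (hψ₁ : ψ₁ = fun s => ‖e₁ s‖ ^ 2 - d₁ ^ 2)
    (hψ₂ : ψ₂ = fun s => ‖e₂ s‖ ^ 2 - d₂ ^ 2)
    (hψ₃ : ψ₃ = fun s => ‖e₃ s‖ ^ 2 - d₃ ^ 2)
    (h₁ : HasDerivAt e₁ (ψ₂ t • e₂ t - ψ₁ t • e₁ t) t)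
    (h₂ : HasDerivAt e₂ (ψ₃ t • e₃ t - ψ₂ t • e₂ t) t)
    (h₃ : HasDerivAt e₃ (ψ₁ t • e₁ t - ψ₃ t • e₃ t) t)
    (hcol : crossJ (e₁ t) (e₂ t) = 0)
    (hsum : e₁ t + e₂ t + e₃ t = 0) :
    HasDerivAt (fun s => crossJ (e₁ s) (e₂ s)) 0 t :=
  stmt_4_general e₁ e₂ e₃ t ψ₁ ψ₂ ψ₃ h₁ h₂ hcol hsum
end

section
/- If e₁ + e₂ + e₃ = 0, e₁ψ₁ = e₂ψ₂ = e₃ψ₃, and e₁ᵀJe₂ = 0 (collinear equilibrium), where ψᵢ = ‖eᵢ‖² - dᵢ² and d₁, d₂, d₃ > 0 satisfy the strict triangle inequalities, then ψ₁ + ψ₂ + ψ₃ < 0. -/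
/-!
Collinearity puts `eᵢ = tᵢ • u` for a unit vector `u`, so `ψᵢ = tᵢ² - dᵢ²`, `t₁ + t₂ + t₃ = 0`
and `ψ₁t₁ = ψ₂t₂ = ψ₃t₃`. Two positive `ψᵢ, ψⱼ` give `tᵢ, tⱼ` of one sign with `|tᵢ| > dᵢ`,
`|tⱼ| > dⱼ`, so `|tₖ| = |tᵢ| + |tⱼ| > dₖ` and all three `ψ` are positive; then all `tᵢ` share a
sign, which `∑ tᵢ = 0` forbids. If exactly one `ψᵢ` is positive, the common value `c = ψᵢtᵢ` is
nonzero and `tᵢ = c / ψᵢ` turns `∑ tᵢ = 0` into `ψ₁ψ₂ + ψ₁ψ₃ + ψ₂ψ₃ = 0`, which with one positive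
and two negative values forces a negative sum. If no `ψᵢ` is positive, the sum vanishes only when
`|tᵢ| = dᵢ` for all `i`, i.e. when the `dᵢ` form a degenerate triangle.
-/

lemma mul_nonneg_of_mul_eq_mul {R : Type*} [CommRing R] [LinearOrder R] [IsStrictOrderedRing R]
    {a b x y : R} (ha : 0 < a) (hb : 0 < b) (h : a * x = b * y) :
    0 ≤ x * y := by
  refine nonneg_of_mul_nonneg_right ?_ (mul_pos ha hb)
  calc 0 ≤ (a * x) * (a * x) := mul_self_nonneg _
    _ = a * b * (x * y) := by nth_rewrite 2 [h]; ring

section LineEquilibrium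

variable {ψ₁ ψ₂ ψ₃ t₁ t₂ t₃ d₁ d₂ d₃ : ℝ}

lemma ne_zero_of_psi_pos (hψ₁ : ψ₁ = t₁ ^ 2 - d₁ ^ 2) (h₁ : 0 < ψ₁) : t₁ ≠ 0 := by
  rintro rfl
  nlinarith [sq_nonneg d₁]

lemma psi_pos_of_psi_pos_of_psi_pos (hd₁ : 0 ≤ d₁) (hd₂ : 0 ≤ d₂) (hd₃ : 0 ≤ d₃)
    (htri : d₃ < d₁ + d₂) (hψ₁ : ψ₁ = t₁ ^ 2 - d₁ ^ 2) (hψ₂ : ψ₂ = t₂ ^ 2 - d₂ ^ 2)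
    (hψ₃ : ψ₃ = t₃ ^ 2 - d₃ ^ 2) (hsum : t₁ + t₂ + t₃ = 0) (h₁₂ : ψ₁ * t₁ = ψ₂ * t₂)
    (h₁ : 0 < ψ₁) (h₂ : 0 < ψ₂) : 0 < ψ₃ := by
  have hsign : 0 ≤ t₁ * t₂ := mul_nonneg_of_mul_eq_mul h₁ h₂ h₁₂
  have hprod : d₁ * d₂ ≤ t₁ * t₂ := by
    refine (sq_le_sq₀ (by positivity) hsign).1 ?_
    rw [mul_pow, mul_pow]
    exact mul_le_mul (by linarith) (by linarith) (sq_nonneg d₂) (sq_nonneg t₁)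
  have ht₃ : t₃ = -(t₁ + t₂) := by linarith
  have : d₃ ^ 2 < t₃ ^ 2 :=
    calc d₃ ^ 2 < (d₁ + d₂) ^ 2 := by gcongr
      _ ≤ t₃ ^ 2 := by rw [ht₃]; nlinarith
  linarith

lemma not_all_psi_pos (hψ₁ : ψ₁ = t₁ ^ 2 - d₁ ^ 2) (hsum : t₁ + t₂ + t₃ = 0)
    (h₁₂ : ψ₁ * t₁ = ψ₂ * t₂) (h₂₃ : ψ₂ * t₂ = ψ₃ * t₃)
    (h₁ : 0 < ψ₁) (h₂ : 0 < ψ₂) (h₃ : 0 < ψ₃) : False := by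
  have hs₁₂ := mul_nonneg_of_mul_eq_mul h₁ h₂ h₁₂
  have hs₂₃ := mul_nonneg_of_mul_eq_mul h₂ h₃ h₂₃
  have hs₁₃ := mul_nonneg_of_mul_eq_mul h₁ h₃ (h₁₂.trans h₂₃)
  have ht₁ : t₁ = 0 := by nlinarith
  exact ne_zero_of_psi_pos hψ₁ h₁ ht₁

lemma psi_sum_neg_of_psi_pos (hd₁ : 0 ≤ d₁) (hd₂ : 0 ≤ d₂) (hd₃ : 0 ≤ d₃)
    (htri₂ : d₂ < d₁ + d₃) (htri₃ : d₃ < d₁ + d₂) (hψ₁ : ψ₁ = t₁ ^ 2 - d₁ ^ 2)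
    (hψ₂ : ψ₂ = t₂ ^ 2 - d₂ ^ 2) (hψ₃ : ψ₃ = t₃ ^ 2 - d₃ ^ 2) (hsum : t₁ + t₂ + t₃ = 0)
    (h₁₂ : ψ₁ * t₁ = ψ₂ * t₂) (h₂₃ : ψ₂ * t₂ = ψ₃ * t₃) (h₁ : 0 < ψ₁) :
    ψ₁ + ψ₂ + ψ₃ < 0 := by
  have hc : ψ₁ * t₁ ≠ 0 := mul_ne_zero h₁.ne' (ne_zero_of_psi_pos hψ₁ h₁)
  have h₂ : ψ₂ < 0 := by
    refine lt_of_le_of_ne (not_lt.1 fun h₂ ↦ ?_) fun h₂ ↦ hc (by rw [h₁₂, h₂, zero_mul])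
    exact not_all_psi_pos hψ₁ hsum h₁₂ h₂₃ h₁ h₂
      (psi_pos_of_psi_pos_of_psi_pos hd₁ hd₂ hd₃ htri₃ hψ₁ hψ₂ hψ₃ hsum h₁₂ h₁ h₂)
  have h₃ : ψ₃ < 0 := by
    refine lt_of_le_of_ne (not_lt.1 fun h₃ ↦ ?_) fun h₃ ↦ hc (by rw [h₁₂, h₂₃, h₃, zero_mul])
    exact not_all_psi_pos hψ₁ hsum h₁₂ h₂₃ h₁ (psi_pos_of_psi_pos_of_psi_pos hd₁ hd₃ hd₂ htri₂
      hψ₁ hψ₃ hψ₂ (by linarith) (h₁₂.trans h₂₃) h₁ h₃) h₃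
  -- multiply `t₁ + t₂ + t₃ = 0` by `ψ₁ψ₂ψ₃` and substitute `ψᵢtᵢ = ψ₁t₁`
  have hσ : ψ₁ * ψ₂ + ψ₁ * ψ₃ + ψ₂ * ψ₃ = 0 := by
    refine (mul_eq_zero.1 ?_).resolve_left hc
    linear_combination ψ₁ * ψ₂ * ψ₃ * hsum + (ψ₁ * ψ₂ + ψ₁ * ψ₃) * h₁₂ + ψ₁ * ψ₂ * h₂₃
  have hpos : 0 < (ψ₁ + ψ₂ + ψ₃) * (ψ₂ + ψ₃) := by
    have : (ψ₁ + ψ₂ + ψ₃) * (ψ₂ + ψ₃) = ψ₂ ^ 2 + ψ₂ * ψ₃ + ψ₃ ^ 2 := by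
      linear_combination hσ
    nlinarith [mul_pos (neg_pos.2 h₂) (neg_pos.2 h₃)]
  exact neg_of_mul_pos_left hpos (by linarith)

lemma false_of_sq_eq_sq_of_strict_triangle (htri₁ : d₁ < d₂ + d₃) (htri₂ : d₂ < d₁ + d₃)
    (htri₃ : d₃ < d₁ + d₂) (h₁ : t₁ ^ 2 = d₁ ^ 2) (h₂ : t₂ ^ 2 = d₂ ^ 2) (h₃ : t₃ ^ 2 = d₃ ^ 2)
    (hsum : t₁ + t₂ + t₃ = 0) : False := by
  have hprod : (t₁ * t₂) ^ 2 = (d₁ * d₂) ^ 2 := by rw [mul_pow, mul_pow, h₁, h₂]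
  rw [show t₃ = -(t₁ + t₂) by linarith] at h₃
  rcases sq_eq_sq_iff_eq_or_eq_neg.1 hprod with h | h
  · have : (d₃ - (d₁ + d₂)) * (d₃ + (d₁ + d₂)) = 0 := by
      linear_combination -h₃ + h₁ + h₂ + 2 * h
    rcases mul_eq_zero.1 this with h' | h' <;> linarith
  · have : (d₃ - (d₁ - d₂)) * (d₃ + (d₁ - d₂)) = 0 := by
      linear_combination -h₃ + h₁ + h₂ + 2 * h
    rcases mul_eq_zero.1 this with h' | h' <;> linarith

lemma psi_sum_neg_of_psi_nonpos (htri₁ : d₁ < d₂ + d₃) (htri₂ : d₂ < d₁ + d₃)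
    (htri₃ : d₃ < d₁ + d₂) (hψ₁ : ψ₁ = t₁ ^ 2 - d₁ ^ 2) (hψ₂ : ψ₂ = t₂ ^ 2 - d₂ ^ 2)
    (hψ₃ : ψ₃ = t₃ ^ 2 - d₃ ^ 2) (hsum : t₁ + t₂ + t₃ = 0)
    (h₁ : ψ₁ ≤ 0) (h₂ : ψ₂ ≤ 0) (h₃ : ψ₃ ≤ 0) : ψ₁ + ψ₂ + ψ₃ < 0 := by
  refine lt_of_le_of_ne (by linarith) fun h ↦ ?_
  exact false_of_sq_eq_sq_of_strict_triangle htri₁ htri₂ htri₃ (by linarith) (by linarith)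
    (by linarith) hsum

theorem psi_sum_neg_of_line_equilibrium (htri₁ : d₁ < d₂ + d₃) (htri₂ : d₂ < d₁ + d₃)
    (htri₃ : d₃ < d₁ + d₂) (hψ₁ : ψ₁ = t₁ ^ 2 - d₁ ^ 2) (hψ₂ : ψ₂ = t₂ ^ 2 - d₂ ^ 2)
    (hψ₃ : ψ₃ = t₃ ^ 2 - d₃ ^ 2) (hsum : t₁ + t₂ + t₃ = 0)
    (h₁₂ : ψ₁ * t₁ = ψ₂ * t₂) (h₂₃ : ψ₂ * t₂ = ψ₃ * t₃) : ψ₁ + ψ₂ + ψ₃ < 0 := by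
  have hd₁ : 0 ≤ d₁ := by linarith
  have hd₂ : 0 ≤ d₂ := by linarith
  have hd₃ : 0 ≤ d₃ := by linarith
  by_cases h₁ : 0 < ψ₁
  · exact psi_sum_neg_of_psi_pos hd₁ hd₂ hd₃ htri₂ htri₃ hψ₁ hψ₂ hψ₃ hsum h₁₂ h₂₃ h₁
  by_cases h₂ : 0 < ψ₂
  · linarith [psi_sum_neg_of_psi_pos hd₂ hd₁ hd₃ htri₁ (by linarith) hψ₂ hψ₁ hψ₃ (by linarith)
      h₁₂.symm (h₁₂.trans h₂₃) h₂]
  by_cases h₃ : 0 < ψ₃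
  · linarith [psi_sum_neg_of_psi_pos hd₃ hd₁ hd₂ (by linarith) (by linarith) hψ₃ hψ₁ hψ₂
      (by linarith) (h₁₂.trans h₂₃).symm h₁₂ h₃]
  exact psi_sum_neg_of_psi_nonpos htri₁ htri₂ htri₃ hψ₁ hψ₂ hψ₃ hsum
    (not_lt.1 h₁) (not_lt.1 h₂) (not_lt.1 h₃)

end LineEquilibrium

lemma exists_eq_smul_of_crossJ_eq_zero {u v : EuclideanSpace ℝ (Fin 2)} (hu : u ≠ 0)
    (h : crossJ u v = 0) : ∃ s : ℝ, v = s • u := by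
  have hnorm : u 0 ^ 2 + u 1 ^ 2 ≠ 0 := by
    rw [← Fin.sum_univ_two (fun i ↦ u i ^ 2), ← EuclideanSpace.real_norm_sq_eq]
    exact pow_ne_zero 2 (norm_ne_zero_iff.2 hu)
  refine ⟨(u 0 * v 0 + u 1 * v 1) / (u 0 ^ 2 + u 1 ^ 2), ?_⟩
  unfold crossJ at h
  ext i
  fin_cases i
  · show v 0 = _ * u 0
    field_simp
    linear_combination (-u 1) * h
  · show v 1 = _ * u 1
    field_simp
    linear_combination u 0 * h

lemma exists_norm_eq_one_smul {E : Type*} [NormedAddCommGroup E] [NormedSpace ℝ E] [Nontrivial E]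
    (v : E) : ∃ u : E, ‖u‖ = 1 ∧ v = ‖v‖ • u := by
  by_cases hv : v = 0
  · obtain ⟨u, hu⟩ := exists_norm_eq E zero_le_one
    exact ⟨u, hu, by simp [hv]⟩
  · exact ⟨‖v‖⁻¹ • v, by simp [norm_smul, hv], by simp [smul_smul, hv]⟩

lemma exists_unit_smul_of_crossJ_eq_zero {e₁ e₂ : EuclideanSpace ℝ (Fin 2)}
    (h : crossJ e₁ e₂ = 0) : ∃ u, ‖u‖ = 1 ∧ ∃ t₁ t₂ : ℝ, e₁ = t₁ • u ∧ e₂ = t₂ • u := by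
  by_cases he₁ : e₁ = 0
  · obtain ⟨u, hu, he₂⟩ := exists_norm_eq_one_smul e₂
    exact ⟨u, hu, 0, ‖e₂‖, by simp [he₁], he₂⟩
  · obtain ⟨s, rfl⟩ := exists_eq_smul_of_crossJ_eq_zero he₁ h
    obtain ⟨u, hu, he₁u⟩ := exists_norm_eq_one_smul e₁
    exact ⟨u, hu, ‖e₁‖, s * ‖e₁‖, he₁u, by rw [mul_smul, ← he₁u]⟩

theorem stmt_5_general (d₁ d₂ d₃ : ℝ)
    (htri₁ : d₁ < d₂ + d₃) (htri₂ : d₂ < d₁ + d₃) (htri₃ : d₃ < d₁ + d₂)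
    (e₁ e₂ e₃ : EuclideanSpace ℝ (Fin 2))
    (ψ₁ ψ₂ ψ₃ : ℝ)
    (hψ₁ : ψ₁ = ‖e₁‖ ^ 2 - d₁ ^ 2) (hψ₂ : ψ₂ = ‖e₂‖ ^ 2 - d₂ ^ 2)
    (hψ₃ : ψ₃ = ‖e₃‖ ^ 2 - d₃ ^ 2)
    (hsum : e₁ + e₂ + e₃ = 0)
    (heq₁₂ : ψ₁ • e₁ = ψ₂ • e₂) (heq₂₃ : ψ₂ • e₂ = ψ₃ • e₃)
    (hcol : crossJ e₁ e₂ = 0) :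
    ψ₁ + ψ₂ + ψ₃ < 0 := by
  obtain ⟨u, hu, t₁, t₂, rfl, rfl⟩ := exists_unit_smul_of_crossJ_eq_zero hcol
  have he₃ : e₃ = (-(t₁ + t₂)) • u := by
    linear_combination (norm := module) hsum
  subst he₃
  have hu₀ : u ≠ 0 := norm_ne_zero_iff.1 (hu ▸ one_ne_zero)
  have hnorm (t : ℝ) : ‖t • u‖ ^ 2 = t ^ 2 := by
    rw [norm_smul, hu, mul_one, Real.norm_eq_abs, sq_abs]
  rw [hnorm] at hψ₁ hψ₂ hψ₃
  rw [smul_smul, smul_smul] at heq₁₂ heq₂₃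
  exact psi_sum_neg_of_line_equilibrium htri₁ htri₂ htri₃ hψ₁ hψ₂ hψ₃ (by ring)
    (smul_left_injective ℝ hu₀ heq₁₂) (smul_left_injective ℝ hu₀ heq₂₃)

/-- At a collinear equilibrium of the link dynamics, with the distances
satisfying the strict triangle inequalities, `ψ₁ + ψ₂ + ψ₃ < 0`. -/
theorem stmt_5 (d₁ d₂ d₃ : ℝ) (hd₁ : 0 < d₁) (hd₂ : 0 < d₂) (hd₃ : 0 < d₃)
    (htri₁ : d₁ < d₂ + d₃) (htri₂ : d₂ < d₁ + d₃) (htri₃ : d₃ < d₁ + d₂)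
    (e₁ e₂ e₃ : EuclideanSpace ℝ (Fin 2))
    (ψ₁ ψ₂ ψ₃ : ℝ)
    (hψ₁ : ψ₁ = ‖e₁‖ ^ 2 - d₁ ^ 2) (hψ₂ : ψ₂ = ‖e₂‖ ^ 2 - d₂ ^ 2)
    (hψ₃ : ψ₃ = ‖e₃‖ ^ 2 - d₃ ^ 2)
    (hsum : e₁ + e₂ + e₃ = 0)
    (heq₁₂ : ψ₁ • e₁ = ψ₂ • e₂) (heq₂₃ : ψ₂ • e₂ = ψ₃ • e₃)
    (hcol : crossJ e₁ e₂ = 0) :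
    ψ₁ + ψ₂ + ψ₃ < 0 :=
  stmt_5_general d₁ d₂ d₃ htri₁ htri₂ htri₃ e₁ e₂ e₃ ψ₁ ψ₂ ψ₃ hψ₁ hψ₂ hψ₃ hsum heq₁₂ heq₂₃ hcol
end

section
/- If d₁, d₂, d₃ > 0 satisfy the strict triangle inequalities, then the symmetric block matrix Γ = [[(2d₁² + 4d₂²)I₂, (d₁² - 3d₂² - d₃²)I₂], [(d₁² - 3d₂² - d₃²)I₂, (2d₂² + 4d₃²)I₂]] is positive definite. -/
/-!
On each coordinate pair `(xᵢ, yᵢ)` the quadratic form of Γ is `a xᵢ² + 2b xᵢyᵢ + c yᵢ²`, which is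
positive definite as soon as `a > 0` and `b² < ac`. With `a = 2d₁² + 4d₂²`, `b = d₁² - 3d₂² - d₃²`,
`c = 2d₂² + 4d₃²` one has `ac - b² = 16 S² + 8 (d₁²d₂² + d₂²d₃² + d₃²d₁²)`, where `16 S²` is
Heron's expression for the squared area of the triangle with sides `d₁, d₂, d₃`; the strict
triangle inequalities make it positive.
-/

open Matrix

section Quadratic

variable {a b c : ℝ}

lemma mul_quadratic_eq (u v : ℝ) :
    a * (a * u ^ 2 + 2 * b * u * v + c * v ^ 2) = (a * u + b * v) ^ 2 + (a * c - b ^ 2) * v ^ 2 := by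
  ring

lemma quadratic_nonneg_of_sq_le (ha : 0 < a) (hdisc : b ^ 2 ≤ a * c) (u v : ℝ) :
    0 ≤ a * u ^ 2 + 2 * b * u * v + c * v ^ 2 := by
  refine nonneg_of_mul_nonneg_right (mul_quadratic_eq (c := c) u v ▸ ?_) ha
  exact add_nonneg (sq_nonneg _) (mul_nonneg (sub_nonneg.2 hdisc) (sq_nonneg v))

lemma quadratic_pos_of_sq_lt (ha : 0 < a) (hdisc : b ^ 2 < a * c) {u v : ℝ}
    (huv : u ≠ 0 ∨ v ≠ 0) : 0 < a * u ^ 2 + 2 * b * u * v + c * v ^ 2 := by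
  refine pos_of_mul_pos_right (mul_quadratic_eq (c := c) u v ▸ ?_) ha.le
  rcases eq_or_ne v 0 with rfl | hv
  · have hu : u ≠ 0 := huv.resolve_right (not_not.2 rfl)
    simpa using sq_pos_iff.2 (mul_ne_zero ha.ne' hu)
  · exact add_pos_of_nonneg_of_pos (sq_nonneg _) (mul_pos (sub_pos.2 hdisc) (by positivity))

end Quadratic

section BlockScalar

variable {n : Type*} [Fintype n] [DecidableEq n] {a b c : ℝ}

lemma dotProduct_fromBlocks_smul_one_mulVec (x : n ⊕ n → ℝ) :
    x ⬝ᵥ fromBlocks (a • 1) (b • 1) (b • 1) (c • 1) *ᵥ x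
      = ∑ i, (a * x (.inl i) ^ 2 + 2 * b * x (.inl i) * x (.inr i) + c * x (.inr i) ^ 2) := by
  simp only [fromBlocks_mulVec, dotProduct, Fintype.sum_sum_type, Sum.elim_inl, Sum.elim_inr,
    smul_mulVec, one_mulVec, Pi.add_apply, Pi.smul_apply, smul_eq_mul, Function.comp_apply,
    ← Finset.sum_add_distrib]
  exact Finset.sum_congr rfl fun i _ ↦ by ring

theorem posDef_fromBlocks_smul_one (ha : 0 < a) (hdisc : b ^ 2 < a * c) :
    (fromBlocks (a • 1) (b • 1) (b • 1) (c • 1) : Matrix (n ⊕ n) (n ⊕ n) ℝ).PosDef := by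
  refine posDef_iff_dotProduct_mulVec.2 ⟨?_, fun x hx ↦ ?_⟩
  · simp [IsHermitian, fromBlocks_transpose]
  obtain ⟨j, hj⟩ := Function.ne_iff.1 hx
  obtain ⟨i, hi⟩ : ∃ i, x (.inl i) ≠ 0 ∨ x (.inr i) ≠ 0 := by
    rcases j with i | i
    exacts [⟨i, .inl hj⟩, ⟨i, .inr hj⟩]
  rw [star_trivial, dotProduct_fromBlocks_smul_one_mulVec]
  exact Finset.sum_pos' (fun k _ ↦ quadratic_nonneg_of_sq_le ha hdisc.le _ _)
    ⟨i, Finset.mem_univ i, quadratic_pos_of_sq_lt ha hdisc hi⟩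

end BlockScalar

lemma heron_pos {d₁ d₂ d₃ : ℝ}
    (htri₁ : d₁ < d₂ + d₃) (htri₂ : d₂ < d₁ + d₃) (htri₃ : d₃ < d₁ + d₂) :
    0 < 2 * (d₁ ^ 2 * d₂ ^ 2 + d₂ ^ 2 * d₃ ^ 2 + d₃ ^ 2 * d₁ ^ 2) - d₁ ^ 4 - d₂ ^ 4 - d₃ ^ 4 := by
  have hfactor : 2 * (d₁ ^ 2 * d₂ ^ 2 + d₂ ^ 2 * d₃ ^ 2 + d₃ ^ 2 * d₁ ^ 2) - d₁ ^ 4 - d₂ ^ 4 - d₃ ^ 4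
      = (d₁ + d₂ + d₃) * (d₂ + d₃ - d₁) * (d₁ + d₃ - d₂) * (d₁ + d₂ - d₃) := by ring
  rw [hfactor]
  have hperim : 0 < d₁ + d₂ + d₃ := by linarith
  have h₁ := sub_pos.2 htri₁
  have h₂ := sub_pos.2 htri₂
  have h₃ := sub_pos.2 htri₃
  positivity

theorem stmt_6_general (d₁ d₂ d₃ : ℝ)
    (htri₁ : d₁ < d₂ + d₃) (htri₂ : d₂ < d₁ + d₃) (htri₃ : d₃ < d₁ + d₂) :
    (Matrix.fromBlocks
      ((2 * d₁ ^ 2 + 4 * d₂ ^ 2) • (1 : Matrix (Fin 2) (Fin 2) ℝ))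
      ((d₁ ^ 2 - 3 * d₂ ^ 2 - d₃ ^ 2) • (1 : Matrix (Fin 2) (Fin 2) ℝ))
      ((d₁ ^ 2 - 3 * d₂ ^ 2 - d₃ ^ 2) • (1 : Matrix (Fin 2) (Fin 2) ℝ))
      ((2 * d₂ ^ 2 + 4 * d₃ ^ 2) • (1 : Matrix (Fin 2) (Fin 2) ℝ))).PosDef := by
  have hd₁ : 0 < d₁ := by linarith
  have hd₂ : 0 < d₂ := by linarith
  have hd₃ : 0 < d₃ := by linarith
  refine posDef_fromBlocks_smul_one (by positivity) ?_
  have hdisc : (2 * d₁ ^ 2 + 4 * d₂ ^ 2) * (2 * d₂ ^ 2 + 4 * d₃ ^ 2)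
        - (d₁ ^ 2 - 3 * d₂ ^ 2 - d₃ ^ 2) ^ 2
      = (2 * (d₁ ^ 2 * d₂ ^ 2 + d₂ ^ 2 * d₃ ^ 2 + d₃ ^ 2 * d₁ ^ 2) - d₁ ^ 4 - d₂ ^ 4 - d₃ ^ 4)
        + 8 * (d₁ ^ 2 * d₂ ^ 2 + d₂ ^ 2 * d₃ ^ 2 + d₃ ^ 2 * d₁ ^ 2) := by ring
  have hheron := heron_pos htri₁ htri₂ htri₃
  have hsum : 0 < d₁ ^ 2 * d₂ ^ 2 + d₂ ^ 2 * d₃ ^ 2 + d₃ ^ 2 * d₁ ^ 2 := by positivity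
  linarith

/-- If the distances satisfy the strict triangle inequalities, then the 4×4
block matrix `Γ` from the collocated-set Jacobian computation is positive
definite. -/
theorem stmt_6 (d₁ d₂ d₃ : ℝ) (hd₁ : 0 < d₁) (hd₂ : 0 < d₂) (hd₃ : 0 < d₃)
    (htri₁ : d₁ < d₂ + d₃) (htri₂ : d₂ < d₁ + d₃) (htri₃ : d₃ < d₁ + d₂) :
    (Matrix.fromBlocks
      ((2 * d₁ ^ 2 + 4 * d₂ ^ 2) • (1 : Matrix (Fin 2) (Fin 2) ℝ))
      ((d₁ ^ 2 - 3 * d₂ ^ 2 - d₃ ^ 2) • (1 : Matrix (Fin 2) (Fin 2) ℝ))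
      ((d₁ ^ 2 - 3 * d₂ ^ 2 - d₃ ^ 2) • (1 : Matrix (Fin 2) (Fin 2) ℝ))
      ((2 * d₂ ^ 2 + 4 * d₃ ^ 2) • (1 : Matrix (Fin 2) (Fin 2) ℝ))).PosDef :=
  stmt_6_general d₁ d₂ d₃ htri₁ htri₂ htri₃
end

section
/- Positive definiteness of the 2×2 matrix [[2d₁² + 4d₂², d₁² - 3d₂² - d₃²], [d₁² - 3d₂² - d₃², 2d₂² + 4d₃²]] holds if and only if (2d₁² + 4d₂²)(2d₂² + 4d₃²) > (d₁² - 3d₂² - d₃²)²; moreover this strict inequality holds whenever d₁, d₂, d₃ > 0 satisfy the strict triangle inequalities. -/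
/-! A real symmetric `2 × 2` matrix with nonnegative corner entry is positive definite exactly
when its determinant is positive. Writing `aᵢ = dᵢ²`, the determinant here is
`2(a₁a₂ + a₂a₃ + a₃a₁) - (a₁² + a₂² + a₃²) + 8(a₁a₂ + a₂a₃ + a₃a₁)`, and the first summand is
Heron's `16 · area²`, i.e. `(d₁ + d₂ + d₃)(d₂ + d₃ - d₁)(d₁ + d₃ - d₂)(d₁ + d₂ - d₃)`, which is
positive under the strict triangle inequalities. -/

namespace Matrix

variable {R : Type*} [CommRing R] [StarRing R] [TrivialStar R]

lemma dotProduct_mulVec_fin_two (a b c : R) (x : Fin 2 → R) :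
    star x ⬝ᵥ (!![a, b; b, c] *ᵥ x) = a * x 0 ^ 2 + 2 * b * x 0 * x 1 + c * x 1 ^ 2 := by
  simp only [star_trivial, dotProduct, mulVec, Fin.sum_univ_two, of_apply, cons_val', cons_val_zero,
    cons_val_one, empty_val', cons_val_fin_one]
  ring

lemma posDef_fin_two_iff [LinearOrder R] [IsStrictOrderedRing R] {a b c : R} :
    (!![a, b; b, c]).PosDef ↔ 0 < a ∧ b ^ 2 < a * c := by
  have hermitian : (!![a, b; b, c]).IsHermitian := by
    rw [isHermitian_iff_isSymm]; ext i j; fin_cases i <;> fin_cases j <;> rfl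
  constructor
  · intro h
    have ha : 0 < a := h.diag_pos (i := 0)
    refine ⟨ha, ?_⟩
    -- the quadratic form takes the value `a (a c - b²)` at `(b, -a)`
    have hx : ![b, -a] ≠ 0 := fun hx => ha.ne' (by simpa using congrFun hx 1)
    have := h.dotProduct_mulVec_pos hx
    rw [dotProduct_mulVec_fin_two] at this
    simp only [cons_val_zero, cons_val_one, cons_val_fin_one, mul_neg, even_two, Even.neg_pow]
      at this
    nlinarith
  · rintro ⟨ha, hdisc⟩
    refine PosDef.of_dotProduct_mulVec_pos hermitian fun x hx => ?_
    rw [dotProduct_mulVec_fin_two]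
    have key : a * (a * x 0 ^ 2 + 2 * b * x 0 * x 1 + c * x 1 ^ 2)
        = (a * x 0 + b * x 1) ^ 2 + (a * c - b ^ 2) * x 1 ^ 2 := by ring
    refine pos_of_mul_pos_right (key ▸ ?_) ha.le
    by_cases h1 : x 1 = 0
    · have h0 : x 0 ≠ 0 := fun h0 => hx (by ext i; fin_cases i <;> simp [h0, h1])
      simp [h1]; positivity
    · have : 0 < (a * c - b ^ 2) * x 1 ^ 2 := mul_pos (by linarith) (by positivity)
      positivity

lemma posDef_fin_two_iff_of_nonneg [LinearOrder R] [IsStrictOrderedRing R] {a b c : R}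
    (ha : 0 ≤ a) : (!![a, b; b, c]).PosDef ↔ b ^ 2 < a * c := by
  refine posDef_fin_two_iff.trans (and_iff_right_of_imp fun h => ha.lt_of_ne ?_)
  rintro rfl
  nlinarith [sq_nonneg b]

end Matrix

section Triangle

variable {R : Type*} [CommRing R] [LinearOrder R] [IsStrictOrderedRing R]

theorem pow_four_add_pow_four_add_pow_four_lt {x y z : R}
    (hx : x < y + z) (hy : y < x + z) (hz : z < x + y) :
    x ^ 4 + y ^ 4 + z ^ 4 < 2 * (x ^ 2 * y ^ 2 + y ^ 2 * z ^ 2 + z ^ 2 * x ^ 2) := by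
  have heron : 2 * (x ^ 2 * y ^ 2 + y ^ 2 * z ^ 2 + z ^ 2 * x ^ 2) - (x ^ 4 + y ^ 4 + z ^ 4)
      = (x + y + z) * (y + z - x) * (x + z - y) * (x + y - z) := by ring
  have : 0 < (x + y + z) * (y + z - x) * (x + z - y) * (x + y - z) := by
    have := sub_pos.2 hx; have := sub_pos.2 hy; have := sub_pos.2 hz
    have : 0 < x + y + z := by linarith
    positivity
  linarith

end Triangle

theorem stmt_7_general (d₁ d₂ d₃ : ℝ) :
    ((Matrix.of ![![2 * d₁ ^ 2 + 4 * d₂ ^ 2, d₁ ^ 2 - 3 * d₂ ^ 2 - d₃ ^ 2],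
        ![d₁ ^ 2 - 3 * d₂ ^ 2 - d₃ ^ 2, 2 * d₂ ^ 2 + 4 * d₃ ^ 2]]).PosDef ↔
      (2 * d₁ ^ 2 + 4 * d₂ ^ 2) * (2 * d₂ ^ 2 + 4 * d₃ ^ 2) >
        (d₁ ^ 2 - 3 * d₂ ^ 2 - d₃ ^ 2) ^ 2) ∧
    (d₁ < d₂ + d₃ → d₂ < d₁ + d₃ → d₃ < d₁ + d₂ →
      (2 * d₁ ^ 2 + 4 * d₂ ^ 2) * (2 * d₂ ^ 2 + 4 * d₃ ^ 2) >
        (d₁ ^ 2 - 3 * d₂ ^ 2 - d₃ ^ 2) ^ 2) := by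
  refine ⟨Matrix.posDef_fin_two_iff_of_nonneg (by positivity), fun h₁ h₂ h₃ => ?_⟩
  have heron := pow_four_add_pow_four_add_pow_four_lt h₁ h₂ h₃
  refine sub_pos.1 ?_
  calc (0 : ℝ) < 2 * (d₁ ^ 2 * d₂ ^ 2 + d₂ ^ 2 * d₃ ^ 2 + d₃ ^ 2 * d₁ ^ 2)
          - (d₁ ^ 4 + d₂ ^ 4 + d₃ ^ 4)
          + 8 * (d₁ ^ 2 * d₂ ^ 2 + d₂ ^ 2 * d₃ ^ 2 + d₃ ^ 2 * d₁ ^ 2) :=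
        add_pos_of_pos_of_nonneg (sub_pos.2 heron) (by positivity)
    _ = _ := by ring

/-- The 2×2 scalar matrix from the collocated-set computation is positive
definite iff `(2d₁² + 4d₂²)(2d₂² + 4d₃²) > (d₁² - 3d₂² - d₃²)²`; moreover this
inequality holds under the strict triangle inequalities. -/
theorem stmt_7 (d₁ d₂ d₃ : ℝ) (hd₁ : 0 < d₁) (hd₂ : 0 < d₂) (hd₃ : 0 < d₃) :
    ((Matrix.of ![![2 * d₁ ^ 2 + 4 * d₂ ^ 2, d₁ ^ 2 - 3 * d₂ ^ 2 - d₃ ^ 2],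
        ![d₁ ^ 2 - 3 * d₂ ^ 2 - d₃ ^ 2, 2 * d₂ ^ 2 + 4 * d₃ ^ 2]]).PosDef ↔
      (2 * d₁ ^ 2 + 4 * d₂ ^ 2) * (2 * d₂ ^ 2 + 4 * d₃ ^ 2) >
        (d₁ ^ 2 - 3 * d₂ ^ 2 - d₃ ^ 2) ^ 2) ∧
    (d₁ < d₂ + d₃ → d₂ < d₁ + d₃ → d₃ < d₁ + d₂ →
      (2 * d₁ ^ 2 + 4 * d₂ ^ 2) * (2 * d₂ ^ 2 + 4 * d₃ ^ 2) >
        (d₁ ^ 2 - 3 * d₂ ^ 2 - d₃ ^ 2) ^ 2) :=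
  stmt_7_general d₁ d₂ d₃
end

section
/- Let M ⊆ ℝⁿ be the zero set of a C¹ function F : ℝⁿ → ℝ^{n-m} whose Jacobian has full rank n-m at every point of M, and let f : ℝⁿ → ℝⁿ be a C² vector field with f(p) ∈ ker F_x(p) (tangency/invariance) for all p ∈ M. Fix p ∈ M and a unit normal n_p = F_x(p)ᵀc. Then ⟨f(p + ε n_p), n_p⟩ = (ε/2)·cᵀ F_x(p)(f_x(p) + f_x(p)ᵀ)F_x(p)ᵀ c + O(ε²) as ε → 0. -/
open Asymptotics

/-! Along the normal line `ε ↦ p + ε n_p`, the normal component `φ ε = ⟪f (p + ε n_p), n_p⟫`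
vanishes at `ε = 0`, since `f p ∈ ker F_x(p)` is orthogonal to `n_p = F_x(p)ᵀ c`. Its derivative at
`0` is `⟪f_x(p) n_p, n_p⟫`, which is half of `⟪(f_x(p) + f_x(p)ᵀ) n_p, n_p⟫`, and a `C²` function
agrees with its first-order Taylor polynomial up to `O(ε²)`. -/

theorem ContDiff.isBigO_sub_sub_smul_deriv {E : Type*} [NormedAddCommGroup E] [NormedSpace ℝ E]
    {φ : ℝ → E} (hφ : ContDiff ℝ 2 φ) (x₀ : ℝ) :
    (fun x => φ x - φ x₀ - (x - x₀) • deriv φ x₀) =O[nhds x₀] fun x => (x - x₀) ^ 2 := by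
  have hrem := (taylor_isLittleO_univ (x₀ := x₀) (n := 2) (by exact_mod_cast hφ)).isBigO
  have hquad : (fun x : ℝ => (x - x₀) ^ 2 • iteratedDeriv 2 φ x₀) =O[nhds x₀]
      fun x => (x - x₀) ^ 2 :=
    isBigO_of_le' _ fun x => by rw [norm_smul, mul_comm]
  refine (hrem.add (hquad.const_smul_left (1 / 2 : ℝ))).congr_left fun x => ?_
  norm_num [taylorWithinEval_succ, iteratedDerivWithin_univ, smul_smul]
  abel

theorem hasDerivAt_inner_apply_add_smul {E G : Type*}
    [NormedAddCommGroup E] [NormedSpace ℝ E] [NormedAddCommGroup G] [InnerProductSpace ℝ G]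
    {f : E → G} {p v : E} (hf : DifferentiableAt ℝ f p) (w : G) :
    HasDerivAt (fun ε : ℝ => inner ℝ (f (p + ε • v)) w) (inner ℝ (fderiv ℝ f p v) w) 0 := by
  have hline : HasDerivAt (fun ε : ℝ => p + ε • v) v 0 := by
    simpa using ((hasDerivAt_id (0 : ℝ)).smul_const v).const_add p
  have hf' : HasFDerivAt f (fderiv ℝ f p) (p + (0 : ℝ) • v) := by
    simpa using hf.hasFDerivAt
  simpa using (hf'.comp_hasDerivAt 0 hline).inner ℝ (hasDerivAt_const (0 : ℝ) w)

theorem stmt_14_general (n k : ℕ)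
    (F : EuclideanSpace ℝ (Fin n) → EuclideanSpace ℝ (Fin k))
    (f : EuclideanSpace ℝ (Fin n) → EuclideanSpace ℝ (Fin n))
    (hf : ContDiff ℝ 2 f)
    (htang : ∀ p, F p = 0 → fderiv ℝ F p (f p) = 0)
    (p : EuclideanSpace ℝ (Fin n)) (hp : F p = 0)
    (c : EuclideanSpace ℝ (Fin k))
    (np : EuclideanSpace ℝ (Fin n))
    (hnp : np = ContinuousLinearMap.adjoint (fderiv ℝ F p) c) :
    (fun ε : ℝ =>
        (inner ℝ (f (p + ε • np)) np : ℝ) -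
          (ε / 2) * ((inner ℝ ((fderiv ℝ f p) np) np : ℝ) +
            (inner ℝ (ContinuousLinearMap.adjoint (fderiv ℝ f p) np) np : ℝ)))
      =O[nhds 0] fun ε : ℝ => ε ^ 2 := by
  set φ : ℝ → ℝ := fun ε => inner ℝ (f (p + ε • np)) np
  have hφ : ContDiff ℝ 2 φ :=
    (hf.comp (contDiff_const.add (contDiff_id.smul contDiff_const))).inner ℝ contDiff_const
  have hφ0 : φ 0 = 0 := by
    simp only [φ, zero_smul, add_zero, hnp, ContinuousLinearMap.adjoint_inner_right,
      htang p hp, inner_zero_left]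
  have hφ'0 : deriv φ 0 = inner ℝ (fderiv ℝ f p np) np :=
    (hasDerivAt_inner_apply_add_smul (hf.differentiable two_ne_zero p) np).deriv
  have hsymm : inner ℝ (ContinuousLinearMap.adjoint (fderiv ℝ f p) np) np =
      (inner ℝ (fderiv ℝ f p np) np : ℝ) := by
    rw [ContinuousLinearMap.adjoint_inner_left, real_inner_comm]
  refine (hφ.isBigO_sub_sub_smul_deriv 0).congr (fun ε => ?_) (fun ε => by simp)
  rw [hφ0, hφ'0, hsymm, smul_eq_mul]
  ring

/-- Taylor expansion of the normal component of the vector field near an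
invariant manifold `M = F⁻¹(0)`: for `p ∈ M` and a unit normal
`n_p = F_x(p)ᵀc`,
`⟨f(p + ε n_p), n_p⟩ = (ε/2)·cᵀ F_x(p)(f_x(p) + f_x(p)ᵀ)F_x(p)ᵀ c + O(ε²)`. -/
theorem stmt_14 (n k : ℕ)
    (F : EuclideanSpace ℝ (Fin n) → EuclideanSpace ℝ (Fin k))
    (f : EuclideanSpace ℝ (Fin n) → EuclideanSpace ℝ (Fin n))
    (hF : ContDiff ℝ 1 F) (hf : ContDiff ℝ 2 f)
    (hrank : ∀ p, F p = 0 → Function.Surjective (fderiv ℝ F p))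
    (htang : ∀ p, F p = 0 → fderiv ℝ F p (f p) = 0)
    (p : EuclideanSpace ℝ (Fin n)) (hp : F p = 0)
    (c : EuclideanSpace ℝ (Fin k))
    (np : EuclideanSpace ℝ (Fin n))
    (hnp : np = ContinuousLinearMap.adjoint (fderiv ℝ F p) c)
    (hunit : ‖np‖ = 1) :
    (fun ε : ℝ =>
        (inner ℝ (f (p + ε • np)) np : ℝ) -
          (ε / 2) * ((inner ℝ ((fderiv ℝ f p) np) np : ℝ) +
            (inner ℝ (ContinuousLinearMap.adjoint (fderiv ℝ f p) np) np : ℝ)))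
      =O[nhds 0] fun ε : ℝ => ε ^ 2 :=
  stmt_14_general n k F f hf htang p hp c np hnp
end

section
/- If the distances d₁, d₂, d₃ > 0 satisfy the strict triangle inequalities, then the target formation set E_e = {e : e₁+e₂+e₃ = 0, ‖eᵢ‖ = dᵢ for i = 1,2,3} and the line set N_e = {e : e₁+e₂+e₃ = 0, e₁ᵀJe₂ = 0} are disjoint. -/
open RealInnerProductSpace

theorem real_inner_sq_add_crossJ_sq (u v : EuclideanSpace ℝ (Fin 2)) :
    ⟪u, v⟫ ^ 2 + crossJ u v ^ 2 = ‖u‖ ^ 2 * ‖v‖ ^ 2 := by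
  simp only [EuclideanSpace.real_norm_sq_eq, PiLp.inner_apply, Fin.sum_univ_two, crossJ,
    RCLike.inner_apply, conj_trivial]
  ring

theorem norm_add_eq_add_or_abs_sub_of_real_inner_sq {F : Type*} [NormedAddCommGroup F]
    [InnerProductSpace ℝ F] {u v : F} (h : ⟪u, v⟫ ^ 2 = ‖u‖ ^ 2 * ‖v‖ ^ 2) :
    ‖u + v‖ = ‖u‖ + ‖v‖ ∨ ‖u + v‖ = |‖u‖ - ‖v‖| := by
  rw [← mul_pow, sq_eq_sq_iff_eq_or_eq_neg] at h
  rcases h with h | h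
  · left
    rw [← sq_eq_sq₀ (norm_nonneg _) (by positivity), norm_add_sq_real, h]
    ring
  · right
    rw [← sq_eq_sq₀ (norm_nonneg _) (abs_nonneg _), sq_abs, norm_add_sq_real, h]
    ring

theorem stmt_16_general (d₁ d₂ d₃ : ℝ)
    (htri₁ : d₁ < d₂ + d₃) (htri₂ : d₂ < d₁ + d₃) (htri₃ : d₃ < d₁ + d₂) :
    Disjoint
      {e : EuclideanSpace ℝ (Fin 2) × EuclideanSpace ℝ (Fin 2) × EuclideanSpace ℝ (Fin 2) |
        e.1 + e.2.1 + e.2.2 = 0 ∧ ‖e.1‖ = d₁ ∧ ‖e.2.1‖ = d₂ ∧ ‖e.2.2‖ = d₃}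
      {e : EuclideanSpace ℝ (Fin 2) × EuclideanSpace ℝ (Fin 2) × EuclideanSpace ℝ (Fin 2) |
        e.1 + e.2.1 + e.2.2 = 0 ∧ crossJ e.1 e.2.1 = 0} := by
  rw [Set.disjoint_left]
  rintro ⟨x, y, z⟩ ⟨hsum, rfl, rfl, rfl⟩ ⟨-, hcross⟩
  dsimp only at hsum hcross htri₁ htri₂ htri₃
  have hz : ‖z‖ = ‖x + y‖ := by rw [eq_neg_of_add_eq_zero_right hsum, norm_neg]
  have hcollinear : ⟪x, y⟫ ^ 2 = ‖x‖ ^ 2 * ‖y‖ ^ 2 := by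
    simpa [hcross] using real_inner_sq_add_crossJ_sq x y
  rcases norm_add_eq_add_or_abs_sub_of_real_inner_sq hcollinear with h | h
  · exact htri₃.ne (hz.trans h)
  · rw [hz, h] at htri₁ htri₂
    cases abs_cases (‖x‖ - ‖y‖) <;> linarith

/-- Under the strict triangle inequalities, the target formation set and the
line set are disjoint. -/
theorem stmt_16 (d₁ d₂ d₃ : ℝ) (hd₁ : 0 < d₁) (hd₂ : 0 < d₂) (hd₃ : 0 < d₃)
    (htri₁ : d₁ < d₂ + d₃) (htri₂ : d₂ < d₁ + d₃) (htri₃ : d₃ < d₁ + d₂) :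
    Disjoint
      {e : EuclideanSpace ℝ (Fin 2) × EuclideanSpace ℝ (Fin 2) × EuclideanSpace ℝ (Fin 2) |
        e.1 + e.2.1 + e.2.2 = 0 ∧ ‖e.1‖ = d₁ ∧ ‖e.2.1‖ = d₂ ∧ ‖e.2.2‖ = d₃}
      {e : EuclideanSpace ℝ (Fin 2) × EuclideanSpace ℝ (Fin 2) × EuclideanSpace ℝ (Fin 2) |
        e.1 + e.2.1 + e.2.2 = 0 ∧ crossJ e.1 e.2.1 = 0} :=
  stmt_16_general d₁ d₂ d₃ htri₁ htri₂ htri₃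
end
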